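/- arXiv:1904.07377 — 6 statements merged into one kernel-verified Lean document; each statement's English description precedes it below -/
import Mathlib

section
/- (Performance bound, continuous case.) If 𝕐 = ℝ^m with Lebesgue measure μ, then for every test T : ⟦Y⟧ → {p0, p1}, the Lebesgue (outer) measure of the correctness set satisfies μ(ℵ(T)) ≤ μ(⟦Y|p0⟧ Δ ⟦Y|p1⟧); in particular log μ(ℵ(T)) ≤ log μ(⟦Y|p0⟧ Δ ⟦Y|p1⟧). -/
open MeasureTheory
open scoped symmDiff

section CorrectnessSet

variable {Ω β γ : Type*} {f : Ω → β} {g : Ω → γ}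

theorem mem_image_setOf_eq_iff_of_image_fiber_eq_singleton {y : β} {c : γ}
    (hy : g '' {ω | f ω = y} = {c}) (q : γ) : y ∈ f '' {ω | g ω = q} ↔ q = c := by
  constructor
  · rintro ⟨ω, rfl, hω⟩
    exact hy.subset ⟨ω, hω, rfl⟩
  · rintro rfl
    obtain ⟨ω, hω, hgω⟩ := hy.symm.subset rfl
    exact ⟨ω, hgω, hω⟩

theorem setOf_image_fiber_eq_singleton_subset_symmDiff {T : β → γ} {p0 p1 : γ}
    (hp : p0 ≠ p1) (hcover : ∀ c : γ, c = p0 ∨ c = p1) :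
    {y | g '' {ω | f ω = y} = {T y}} ⊆ (f '' {ω | g ω = p0}) ∆ (f '' {ω | g ω = p1}) := by
  intro y hy
  rw [Set.mem_symmDiff, mem_image_setOf_eq_iff_of_image_fiber_eq_singleton hy,
    mem_image_setOf_eq_iff_of_image_fiber_eq_singleton hy]
  rcases hcover (T y) with h | h <;> rw [h] <;> simp [hp, hp.symm]

end CorrectnessSet

theorem performance_bound_continuous_general {Ω 𝕏 ℍ : Type*} {m : ℕ}
    (p0 p1 : ℍ) (hp : p0 ≠ p1) (hcover : ∀ h : ℍ, h = p0 ∨ h = p1)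
    (X : Ω → 𝕏) (gY : 𝕏 → (Fin m → ℝ)) (gH : 𝕏 → ℍ) (T : (Fin m → ℝ) → ℍ) :
    volume {y ∈ Set.range (fun ω => gY (X ω)) |
          gH '' (X '' {ω | gY (X ω) = y}) = {T y}} ≤
        volume ((((fun ω => gY (X ω)) '' {ω | gH (X ω) = p0}) \
              ((fun ω => gY (X ω)) '' {ω | gH (X ω) = p1})) ∪
            (((fun ω => gY (X ω)) '' {ω | gH (X ω) = p1}) \
              ((fun ω => gY (X ω)) '' {ω | gH (X ω) = p0}))) ∧
      ENNReal.log (volume {y ∈ Set.range (fun ω => gY (X ω)) |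
          gH '' (X '' {ω | gY (X ω) = y}) = {T y}}) ≤
        ENNReal.log (volume ((((fun ω => gY (X ω)) '' {ω | gH (X ω) = p0}) \
              ((fun ω => gY (X ω)) '' {ω | gH (X ω) = p1})) ∪
            (((fun ω => gY (X ω)) '' {ω | gH (X ω) = p1}) \
              ((fun ω => gY (X ω)) '' {ω | gH (X ω) = p0})))) := by
  have hsub : {y ∈ Set.range (fun ω => gY (X ω)) |
      gH '' (X '' {ω | gY (X ω) = y}) = {T y}} ⊆
      ((fun ω => gY (X ω)) '' {ω | gH (X ω) = p0}) ∆
        ((fun ω => gY (X ω)) '' {ω | gH (X ω) = p1}) :=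
    fun y hy => setOf_image_fiber_eq_singleton_subset_symmDiff hp hcover
      (by simpa only [Set.mem_ofPred_eq, Set.image_image] using hy.2)
  have hle := measure_mono (μ := volume) hsub
  exact ⟨hle, ENNReal.log_monotone hle⟩

/-- **Performance bound (continuous case).**
If `𝕐 = ℝ^m` with Lebesgue measure `μ`, then for every test `T : ⟦Y⟧ → {p0, p1}`,
the Lebesgue (outer) measure of the correctness set
`ℵ(T) = {y ∈ ⟦Y⟧ : ⟦H|⟦X|y⟧⟧ = {T y}}` satisfies
`μ(ℵ(T)) ≤ μ(⟦Y|p0⟧ Δ ⟦Y|p1⟧)`; in particular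
`log μ(ℵ(T)) ≤ log μ(⟦Y|p0⟧ Δ ⟦Y|p1⟧)`. -/
theorem performance_bound_continuous {Ω 𝕏 ℍ : Type*} [Nonempty Ω] {m : ℕ}
    (p0 p1 : ℍ) (hp : p0 ≠ p1) (hcover : ∀ h : ℍ, h = p0 ∨ h = p1)
    (X : Ω → 𝕏) (gY : 𝕏 → (Fin m → ℝ)) (gH : 𝕏 → ℍ) (T : (Fin m → ℝ) → ℍ) :
    volume {y ∈ Set.range (fun ω => gY (X ω)) |
          gH '' (X '' {ω | gY (X ω) = y}) = {T y}} ≤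
        volume ((((fun ω => gY (X ω)) '' {ω | gH (X ω) = p0}) \
              ((fun ω => gY (X ω)) '' {ω | gH (X ω) = p1})) ∪
            (((fun ω => gY (X ω)) '' {ω | gH (X ω) = p1}) \
              ((fun ω => gY (X ω)) '' {ω | gH (X ω) = p0}))) ∧
      ENNReal.log (volume {y ∈ Set.range (fun ω => gY (X ω)) |
          gH '' (X '' {ω | gY (X ω) = y}) = {T y}}) ≤
        ENNReal.log (volume ((((fun ω => gY (X ω)) '' {ω | gH (X ω) = p0}) \
              ((fun ω => gY (X ω)) '' {ω | gH (X ω) = p1})) ∪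
            (((fun ω => gY (X ω)) '' {ω | gH (X ω) = p1}) \
              ((fun ω => gY (X ω)) '' {ω | gH (X ω) = p0})))) :=
  performance_bound_continuous_general p0 p1 hp hcover X gY gH T
end

section
/- (Performance bound, discrete case.) If Ω is finite, then for every test T : ⟦Y⟧ → {p0, p1}, the cardinality of the correctness set satisfies |ℵ(T)| ≤ |⟦Y|p0⟧ Δ ⟦Y|p1⟧|; in particular log |ℵ(T)| ≤ log |⟦Y|p0⟧ Δ ⟦Y|p1⟧|. -/
/-!
If `y` is classified correctly, every `ω` in the fibre `Y⁻¹ {y}` has hypothesis `T y`, so `y`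
occurs under `T y` and under no other hypothesis: it lies in `⟦Y|p0⟧ Δ ⟦Y|p1⟧`. Hence the
correctness set is a subset of this finite symmetric difference, and `log` is monotone on
natural numbers.
-/

open scoped symmDiff

lemma Real.log_natCast_le_log_natCast {m n : ℕ} (h : m ≤ n) : Real.log m ≤ Real.log n := by
  rcases m.eq_zero_or_pos with rfl | hm
  · simpa using Real.log_natCast_nonneg n
  · exact Real.log_le_log (by exact_mod_cast hm) (by exact_mod_cast h)

section CorrectnessSet

variable {Ω 𝕐 ℍ : Type*} (Y : Ω → 𝕐) (H : Ω → ℍ)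

lemma mem_image_diff_of_image_fiber_eq_singleton {y : 𝕐} {c q : ℍ} (hy : y ∈ Set.range Y)
    (hfiber : H '' {ω | Y ω = y} = {c}) (hqc : q ≠ c) :
    y ∈ Y '' {ω | H ω = c} \ Y '' {ω | H ω = q} := by
  have hconst : ∀ ω, Y ω = y → H ω = c := fun ω hω =>
    Set.eq_of_mem_singleton (hfiber ▸ Set.mem_image_of_mem H (show ω ∈ {ω | Y ω = y} from hω))
  obtain ⟨ω₀, hω₀⟩ := hy
  refine ⟨⟨ω₀, hconst ω₀ hω₀, hω₀⟩, ?_⟩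
  rintro ⟨ω, hωq, hωy⟩
  exact hqc (hωq.symm.trans (hconst ω hωy))

lemma correctnessSet_subset_symmDiff {p0 p1 : ℍ} (hp : p0 ≠ p1)
    (hcover : ∀ h : ℍ, h = p0 ∨ h = p1) (T : 𝕐 → ℍ) :
    {y ∈ Set.range Y | H '' {ω | Y ω = y} = {T y}} ⊆
      (Y '' {ω | H ω = p0}) ∆ (Y '' {ω | H ω = p1}) := by
  rintro y ⟨hy, hfiber⟩
  rcases hcover (T y) with hT | hT <;> rw [hT] at hfiber
  · exact Or.inl (mem_image_diff_of_image_fiber_eq_singleton Y H hy hfiber hp.symm)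
  · exact Or.inr (mem_image_diff_of_image_fiber_eq_singleton Y H hy hfiber hp)

end CorrectnessSet

theorem performance_bound_discrete_general {Ω 𝕏 𝕐 ℍ : Type*} [Finite Ω]
    (p0 p1 : ℍ) (hp : p0 ≠ p1) (hcover : ∀ h : ℍ, h = p0 ∨ h = p1)
    (X : Ω → 𝕏) (gY : 𝕏 → 𝕐) (gH : 𝕏 → ℍ) (T : 𝕐 → ℍ) :
    {y ∈ Set.range (fun ω => gY (X ω)) |
          gH '' (X '' {ω | gY (X ω) = y}) = {T y}}.ncard ≤
        ((((fun ω => gY (X ω)) '' {ω | gH (X ω) = p0}) \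
              ((fun ω => gY (X ω)) '' {ω | gH (X ω) = p1})) ∪
            (((fun ω => gY (X ω)) '' {ω | gH (X ω) = p1}) \
              ((fun ω => gY (X ω)) '' {ω | gH (X ω) = p0}))).ncard ∧
      Real.log {y ∈ Set.range (fun ω => gY (X ω)) |
          gH '' (X '' {ω | gY (X ω) = y}) = {T y}}.ncard ≤
        Real.log ((((fun ω => gY (X ω)) '' {ω | gH (X ω) = p0}) \
              ((fun ω => gY (X ω)) '' {ω | gH (X ω) = p1})) ∪
            (((fun ω => gY (X ω)) '' {ω | gH (X ω) = p1}) \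
              ((fun ω => gY (X ω)) '' {ω | gH (X ω) = p0}))).ncard := by
  simp only [Set.image_image]
  have hcard := Set.ncard_le_ncard
    (correctnessSet_subset_symmDiff (fun ω => gY (X ω)) (fun ω => gH (X ω)) hp hcover T)
    ((Set.toFinite _).symmDiff (Set.toFinite _))
  exact ⟨hcard, Real.log_natCast_le_log_natCast hcard⟩

/-- **Performance bound (discrete case).**
If `Ω` is finite, then for every test `T : ⟦Y⟧ → {p0, p1}`, the cardinality of the
correctness set `ℵ(T) = {y ∈ ⟦Y⟧ : ⟦H|⟦X|y⟧⟧ = {T y}}` satisfies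
`|ℵ(T)| ≤ |⟦Y|p0⟧ Δ ⟦Y|p1⟧|`; in particular
`log |ℵ(T)| ≤ log |⟦Y|p0⟧ Δ ⟦Y|p1⟧|`. -/
theorem performance_bound_discrete {Ω 𝕏 𝕐 ℍ : Type*} [Nonempty Ω] [Finite Ω]
    (p0 p1 : ℍ) (hp : p0 ≠ p1) (hcover : ∀ h : ℍ, h = p0 ∨ h = p1)
    (X : Ω → 𝕏) (gY : 𝕏 → 𝕐) (gH : 𝕏 → ℍ) (T : 𝕐 → ℍ) :
    {y ∈ Set.range (fun ω => gY (X ω)) |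
          gH '' (X '' {ω | gY (X ω) = y}) = {T y}}.ncard ≤
        ((((fun ω => gY (X ω)) '' {ω | gH (X ω) = p0}) \
              ((fun ω => gY (X ω)) '' {ω | gH (X ω) = p1})) ∪
            (((fun ω => gY (X ω)) '' {ω | gH (X ω) = p1}) \
              ((fun ω => gY (X ω)) '' {ω | gH (X ω) = p0}))).ncard ∧
      Real.log {y ∈ Set.range (fun ω => gY (X ω)) |
          gH '' (X '' {ω | gY (X ω) = y}) = {T y}}.ncard ≤
        Real.log ((((fun ω => gY (X ω)) '' {ω | gH (X ω) = p0}) \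
              ((fun ω => gY (X ω)) '' {ω | gH (X ω) = p1})) ∪
            (((fun ω => gY (X ω)) '' {ω | gH (X ω) = p1}) \
              ((fun ω => gY (X ω)) '' {ω | gH (X ω) = p0}))).ncard :=
  performance_bound_discrete_general p0 p1 hp hcover X gY gH T
end

section
/- (Achievability by consistent tests.) If a test T : ⟦Y⟧ → {p0, p1} is consistent, then its correctness set equals the full symmetric difference: ℵ(T) = ⟦Y|p0⟧ Δ ⟦Y|p1⟧. -/
/-! Correctness at `y` says that the fiber of `Y` over `y` carries the single hypothesis `T y`.
As `H` takes only the values `p0`, `p1`, this holds for some hypothesis exactly when `y` lies in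
one of `⟦Y|p0⟧`, `⟦Y|p1⟧` but not the other, and consistency forces `T y` to be that hypothesis. -/

section Fibers

variable {Ω 𝕐 ℍ : Type*} (Y : Ω → 𝕐) (H : Ω → ℍ)

theorem mem_image_fiber_iff_mem_image_fiber {y : 𝕐} {h : ℍ} :
    h ∈ H '' {ω | Y ω = y} ↔ y ∈ Y '' {ω | H ω = h} := by
  simp only [Set.mem_image, Set.mem_ofPred_eq, and_comm]

theorem image_fiber_eq_singleton_iff {p0 p1 : ℍ} (hp : p0 ≠ p1)
    (hcover : ∀ h : ℍ, h = p0 ∨ h = p1) {y : 𝕐} :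
    H '' {ω | Y ω = y} = {p0} ↔
      y ∈ Y '' {ω | H ω = p0} ∧ y ∉ Y '' {ω | H ω = p1} := by
  rw [Set.eq_singleton_iff_unique_mem, mem_image_fiber_iff_mem_image_fiber]
  refine and_congr_right fun _ => ⟨fun hunique hy1 => ?_, fun hy1 h hh => ?_⟩
  · exact hp (hunique p1 ((mem_image_fiber_iff_mem_image_fiber Y H).2 hy1)).symm
  · rcases hcover h with rfl | rfl
    · rfl
    · exact absurd ((mem_image_fiber_iff_mem_image_fiber Y H).1 hh) hy1

end Fibers

theorem consistent_correctness_eq_symmDiff_general {Ω 𝕏 𝕐 ℍ : Type*}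
    (p0 p1 : ℍ) (hp : p0 ≠ p1) (hcover : ∀ h : ℍ, h = p0 ∨ h = p1)
    (X : Ω → 𝕏) (gY : 𝕏 → 𝕐) (gH : 𝕏 → ℍ) (T : 𝕐 → ℍ)
    (hT0 : ∀ y ∈ Set.range (fun ω => gY (X ω)),
      T y = p0 → y ∈ (fun ω => gY (X ω)) '' {ω | gH (X ω) = p0})
    (hT1 : ∀ y ∈ Set.range (fun ω => gY (X ω)),
      T y = p1 → y ∈ (fun ω => gY (X ω)) '' {ω | gH (X ω) = p1}) :
    {y ∈ Set.range (fun ω => gY (X ω)) |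
        gH '' (X '' {ω | gY (X ω) = y}) = {T y}} =
      (((fun ω => gY (X ω)) '' {ω | gH (X ω) = p0}) \
          ((fun ω => gY (X ω)) '' {ω | gH (X ω) = p1})) ∪
        (((fun ω => gY (X ω)) '' {ω | gH (X ω) = p1}) \
          ((fun ω => gY (X ω)) '' {ω | gH (X ω) = p0})) := by
  ext y
  simp only [Set.mem_sep_iff, Set.image_image, Set.mem_union, Set.mem_sdiff]
  have hfib0 := image_fiber_eq_singleton_iff (fun ω => gY (X ω)) (fun ω => gH (X ω))
    hp hcover (y := y)
  have hfib1 := image_fiber_eq_singleton_iff (fun ω => gY (X ω)) (fun ω => gH (X ω))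
    hp.symm (fun h => (hcover h).symm) (y := y)
  constructor
  · rintro ⟨-, hfib⟩
    rcases hcover (T y) with hT | hT <;> rw [hT] at hfib
    · exact Or.inl (hfib0.1 hfib)
    · exact Or.inr (hfib1.1 hfib)
  · rintro (hy | hy)
    · have hrange := Set.mem_range_of_mem_image _ _ hy.1
      have hT : T y = p0 := (hcover (T y)).resolve_right fun hT => hy.2 (hT1 y hrange hT)
      exact ⟨hrange, hT ▸ hfib0.2 hy⟩
    · have hrange := Set.mem_range_of_mem_image _ _ hy.1
      have hT : T y = p1 := (hcover (T y)).resolve_left fun hT => hy.2 (hT0 y hrange hT)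
      exact ⟨hrange, hT ▸ hfib1.2 hy⟩

/-- **Achievability by consistent tests.**
If a test `T : ⟦Y⟧ → {p0, p1}` is consistent (for `y ∈ ⟦Y⟧`, `T y = p0` implies
`y ∈ ⟦Y|p0⟧` and `T y = p1` implies `y ∈ ⟦Y|p1⟧`), then its correctness set equals
the full symmetric difference: `ℵ(T) = ⟦Y|p0⟧ Δ ⟦Y|p1⟧`. -/
theorem consistent_correctness_eq_symmDiff {Ω 𝕏 𝕐 ℍ : Type*} [Nonempty Ω]
    (p0 p1 : ℍ) (hp : p0 ≠ p1) (hcover : ∀ h : ℍ, h = p0 ∨ h = p1)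
    (X : Ω → 𝕏) (gY : 𝕏 → 𝕐) (gH : 𝕏 → ℍ) (T : 𝕐 → ℍ)
    (hT0 : ∀ y ∈ Set.range (fun ω => gY (X ω)),
      T y = p0 → y ∈ (fun ω => gY (X ω)) '' {ω | gH (X ω) = p0})
    (hT1 : ∀ y ∈ Set.range (fun ω => gY (X ω)),
      T y = p1 → y ∈ (fun ω => gY (X ω)) '' {ω | gH (X ω) = p1}) :
    {y ∈ Set.range (fun ω => gY (X ω)) |
        gH '' (X '' {ω | gY (X ω) = y}) = {T y}} =
      (((fun ω => gY (X ω)) '' {ω | gH (X ω) = p0}) \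
          ((fun ω => gY (X ω)) '' {ω | gH (X ω) = p1})) ∪
        (((fun ω => gY (X ω)) '' {ω | gH (X ω) = p1}) \
          ((fun ω => gY (X ω)) '' {ω | gH (X ω) = p0})) :=
  consistent_correctness_eq_symmDiff_general p0 p1 hp hcover X gY gH T hT0 hT1
end

section
/- (Optimal tests, continuous case.) Suppose 𝕐 = ℝ^m with Lebesgue measure μ and T : ⟦Y⟧ → {p0, p1} is a consistent test. Then T maximizes the performance over all tests: for every test T' : ⟦Y⟧ → {p0, p1}, μ(ℵ(T')) ≤ μ(ℵ(T)). -/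
open MeasureTheory

/-! A consistent test `T` only ever answers with a hypothesis that actually occurs over the
observation `y`. So wherever any test `T'` is correct, i.e. the hypothesis over `y` is forced to
be `T' y`, it is forced to be `T y` as well: `ℵ(T') ⊆ ℵ(T)`, and monotonicity of the (outer)
measure concludes. -/

section Tests

variable {Ω 𝕏 𝕐 ℍ : Type*}

/-- The correctness set `ℵ(S)` of a test `S`, for `Y = gY ∘ X` and `H = gH ∘ X`. -/
def correctnessSet (X : Ω → 𝕏) (gY : 𝕏 → 𝕐) (gH : 𝕏 → ℍ) (S : 𝕐 → ℍ) : Set 𝕐 :=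
  {y ∈ Set.range (fun ω => gY (X ω)) | gH '' (X '' {ω | gY (X ω) = y}) = {S y}}

/-- Consistency, with the paper's two conditions `T y = pᵢ → y ∈ ⟦Y|pᵢ⟧` merged into one. -/
def IsConsistentTest (Y : Ω → 𝕐) (H : Ω → ℍ) (T : 𝕐 → ℍ) : Prop :=
  ∀ y ∈ Set.range Y, y ∈ Y '' {ω | H ω = T y}

theorem isConsistentTest_of_cover {Y : Ω → 𝕐} {H : Ω → ℍ} {T : 𝕐 → ℍ} {p0 p1 : ℍ}
    (hcover : ∀ h : ℍ, h = p0 ∨ h = p1)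
    (hT0 : ∀ y ∈ Set.range Y, T y = p0 → y ∈ Y '' {ω | H ω = p0})
    (hT1 : ∀ y ∈ Set.range Y, T y = p1 → y ∈ Y '' {ω | H ω = p1}) :
    IsConsistentTest Y H T := by
  intro y hy
  rcases hcover (T y) with h | h
  · exact h ▸ hT0 y hy h
  · exact h ▸ hT1 y hy h

theorem correctnessSet_subset_of_isConsistentTest {X : Ω → 𝕏} {gY : 𝕏 → 𝕐} {gH : 𝕏 → ℍ}
    {T : 𝕐 → ℍ} (hT : IsConsistentTest (fun ω => gY (X ω)) (fun ω => gH (X ω)) T)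
    (T' : 𝕐 → ℍ) : correctnessSet X gY gH T' ⊆ correctnessSet X gY gH T := by
  rintro y ⟨hy, hcorrect⟩
  obtain ⟨ω, hωT, hωy⟩ := hT y hy
  have hTy_mem : T y ∈ gH '' (X '' {ω | gY (X ω) = y}) := ⟨X ω, ⟨ω, hωy, rfl⟩, hωT⟩
  rw [hcorrect, Set.mem_singleton_iff] at hTy_mem
  exact ⟨hy, hTy_mem ▸ hcorrect⟩

end Tests

theorem optimal_test_continuous_general {Ω 𝕏 ℍ : Type*} {m : ℕ}
    (p0 p1 : ℍ) (hcover : ∀ h : ℍ, h = p0 ∨ h = p1)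
    (X : Ω → 𝕏) (gY : 𝕏 → (Fin m → ℝ)) (gH : 𝕏 → ℍ) (T : (Fin m → ℝ) → ℍ)
    (hT0 : ∀ y ∈ Set.range (fun ω => gY (X ω)),
      T y = p0 → y ∈ (fun ω => gY (X ω)) '' {ω | gH (X ω) = p0})
    (hT1 : ∀ y ∈ Set.range (fun ω => gY (X ω)),
      T y = p1 → y ∈ (fun ω => gY (X ω)) '' {ω | gH (X ω) = p1}) :
    ∀ T' : (Fin m → ℝ) → ℍ,
      volume {y ∈ Set.range (fun ω => gY (X ω)) |
          gH '' (X '' {ω | gY (X ω) = y}) = {T' y}} ≤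
        volume {y ∈ Set.range (fun ω => gY (X ω)) |
          gH '' (X '' {ω | gY (X ω) = y}) = {T y}} := fun T' =>
  measure_mono <| correctnessSet_subset_of_isConsistentTest
    (isConsistentTest_of_cover (H := fun ω => gH (X ω)) hcover hT0 hT1) T'

/-- **Optimal tests (continuous case).**
Suppose `𝕐 = ℝ^m` with Lebesgue measure `μ` and `T : ⟦Y⟧ → {p0, p1}` is a consistent
test (for `y ∈ ⟦Y⟧`, `T y = p0` implies `y ∈ ⟦Y|p0⟧` and `T y = p1` implies
`y ∈ ⟦Y|p1⟧`).  Then `T` maximizes the performance over all tests: for every test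
`T' : ⟦Y⟧ → {p0, p1}`, `μ(ℵ(T')) ≤ μ(ℵ(T))`, where
`ℵ(S) = {y ∈ ⟦Y⟧ : ⟦H|⟦X|y⟧⟧ = {S y}}`. -/
theorem optimal_test_continuous {Ω 𝕏 ℍ : Type*} [Nonempty Ω] {m : ℕ}
    (p0 p1 : ℍ) (hp : p0 ≠ p1) (hcover : ∀ h : ℍ, h = p0 ∨ h = p1)
    (X : Ω → 𝕏) (gY : 𝕏 → (Fin m → ℝ)) (gH : 𝕏 → ℍ) (T : (Fin m → ℝ) → ℍ)
    (hT0 : ∀ y ∈ Set.range (fun ω => gY (X ω)),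
      T y = p0 → y ∈ (fun ω => gY (X ω)) '' {ω | gH (X ω) = p0})
    (hT1 : ∀ y ∈ Set.range (fun ω => gY (X ω)),
      T y = p1 → y ∈ (fun ω => gY (X ω)) '' {ω | gH (X ω) = p1}) :
    ∀ T' : (Fin m → ℝ) → ℍ,
      volume {y ∈ Set.range (fun ω => gY (X ω)) |
          gH '' (X '' {ω | gY (X ω) = y}) = {T' y}} ≤
        volume {y ∈ Set.range (fun ω => gY (X ω)) |
          gH '' (X '' {ω | gY (X ω) = y}) = {T y}} :=
  optimal_test_continuous_general p0 p1 hcover X gY gH T hT0 hT1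
end

section
/- (Optimal tests, discrete case.) Suppose Ω is finite and T : ⟦Y⟧ → {p0, p1} is a consistent test. Then T maximizes the performance over all tests: for every test T' : ⟦Y⟧ → {p0, p1}, |ℵ(T')| ≤ |ℵ(T)|. -/
/-!
A consistent test is right wherever any test is right: if some `T'` is correct at `y`, every
outcome `ω` with `Y ω = y` has `H ω = T' y`, while consistency provides such an `ω` with
`H ω = T y`; hence `T y = T' y` and `ℵ(T') ⊆ ℵ(T)`.
-/

namespace HypothesisTest

variable {Ω 𝕏 𝕐 ℍ : Type*} (X : Ω → 𝕏) (gY : 𝕏 → 𝕐) (gH : 𝕏 → ℍ)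

/-- The correctness set `ℵ(T)`. -/
def correctnessSet (T : 𝕐 → ℍ) : Set 𝕐 :=
  {y ∈ Set.range (fun ω => gY (X ω)) | gH '' (X '' {ω | gY (X ω) = y}) = {T y}}

/-- The value `T y` is attained by `H` on the fibre of `Y` over every `y ∈ ⟦Y⟧`; for a
two-point `ℍ` this is the consistency of the paper. -/
def IsConsistent (T : 𝕐 → ℍ) : Prop :=
  ∀ y ∈ Set.range (fun ω => gY (X ω)), ∃ ω, gY (X ω) = y ∧ gH (X ω) = T y

variable {X gY gH}

theorem isConsistent_of_forall_eq_or_eq {p0 p1 : ℍ} (hcover : ∀ h : ℍ, h = p0 ∨ h = p1)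
    {T : 𝕐 → ℍ}
    (hT0 : ∀ y ∈ Set.range (fun ω => gY (X ω)),
      T y = p0 → y ∈ (fun ω => gY (X ω)) '' {ω | gH (X ω) = p0})
    (hT1 : ∀ y ∈ Set.range (fun ω => gY (X ω)),
      T y = p1 → y ∈ (fun ω => gY (X ω)) '' {ω | gH (X ω) = p1}) :
    IsConsistent X gY gH T := by
  intro y hy
  rcases hcover (T y) with h | h
  · obtain ⟨ω, hωH, hωY⟩ := hT0 y hy h
    exact ⟨ω, hωY, hωH.trans h.symm⟩
  · obtain ⟨ω, hωH, hωY⟩ := hT1 y hy h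
    exact ⟨ω, hωY, hωH.trans h.symm⟩

theorem eq_of_mem_correctnessSet {T : 𝕐 → ℍ} {y : 𝕐} (hy : y ∈ correctnessSet X gY gH T)
    {ω : Ω} (hω : gY (X ω) = y) : gH (X ω) = T y := by
  have hmem : gH (X ω) ∈ gH '' (X '' {ω | gY (X ω) = y}) := ⟨X ω, ⟨ω, hω, rfl⟩, rfl⟩
  rwa [hy.2] at hmem

theorem correctnessSet_subset_of_isConsistent {T : 𝕐 → ℍ} (hT : IsConsistent X gY gH T)
    (T' : 𝕐 → ℍ) : correctnessSet X gY gH T' ⊆ correctnessSet X gY gH T := by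
  intro y hy
  obtain ⟨ω, hωY, hωH⟩ := hT y hy.1
  have hTT' : T y = T' y := hωH.symm.trans (eq_of_mem_correctnessSet hy hωY)
  exact ⟨hy.1, hTT' ▸ hy.2⟩

theorem correctnessSet_finite [Finite Ω] (T : 𝕐 → ℍ) : (correctnessSet X gY gH T).Finite :=
  (Set.finite_range _).subset (Set.sep_subset _ _)

theorem ncard_correctnessSet_le_of_isConsistent [Finite Ω] {T : 𝕐 → ℍ}
    (hT : IsConsistent X gY gH T) (T' : 𝕐 → ℍ) :
    (correctnessSet X gY gH T').ncard ≤ (correctnessSet X gY gH T).ncard :=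
  Set.ncard_le_ncard (correctnessSet_subset_of_isConsistent hT T') (correctnessSet_finite T)

end HypothesisTest

theorem optimal_test_discrete_general {Ω 𝕏 𝕐 ℍ : Type*} [Finite Ω]
    (p0 p1 : ℍ) (hcover : ∀ h : ℍ, h = p0 ∨ h = p1)
    (X : Ω → 𝕏) (gY : 𝕏 → 𝕐) (gH : 𝕏 → ℍ) (T : 𝕐 → ℍ)
    (hT0 : ∀ y ∈ Set.range (fun ω => gY (X ω)),
      T y = p0 → y ∈ (fun ω => gY (X ω)) '' {ω | gH (X ω) = p0})
    (hT1 : ∀ y ∈ Set.range (fun ω => gY (X ω)),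
      T y = p1 → y ∈ (fun ω => gY (X ω)) '' {ω | gH (X ω) = p1}) :
    ∀ T' : 𝕐 → ℍ,
      {y ∈ Set.range (fun ω => gY (X ω)) |
          gH '' (X '' {ω | gY (X ω) = y}) = {T' y}}.ncard ≤
        {y ∈ Set.range (fun ω => gY (X ω)) |
          gH '' (X '' {ω | gY (X ω) = y}) = {T y}}.ncard :=
  HypothesisTest.ncard_correctnessSet_le_of_isConsistent
    (HypothesisTest.isConsistent_of_forall_eq_or_eq hcover hT0 hT1)

/-- **Optimal tests (discrete case).**
Suppose `Ω` is finite and `T : ⟦Y⟧ → {p0, p1}` is a consistent test (for `y ∈ ⟦Y⟧`,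
`T y = p0` implies `y ∈ ⟦Y|p0⟧` and `T y = p1` implies `y ∈ ⟦Y|p1⟧`).  Then `T`
maximizes the performance over all tests: for every test `T' : ⟦Y⟧ → {p0, p1}`,
`|ℵ(T')| ≤ |ℵ(T)|`, where `ℵ(S) = {y ∈ ⟦Y⟧ : ⟦H|⟦X|y⟧⟧ = {S y}}`. -/
theorem optimal_test_discrete {Ω 𝕏 𝕐 ℍ : Type*} [Nonempty Ω] [Finite Ω]
    (p0 p1 : ℍ) (hp : p0 ≠ p1) (hcover : ∀ h : ℍ, h = p0 ∨ h = p1)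
    (X : Ω → 𝕏) (gY : 𝕏 → 𝕐) (gH : 𝕏 → ℍ) (T : 𝕐 → ℍ)
    (hT0 : ∀ y ∈ Set.range (fun ω => gY (X ω)),
      T y = p0 → y ∈ (fun ω => gY (X ω)) '' {ω | gH (X ω) = p0})
    (hT1 : ∀ y ∈ Set.range (fun ω => gY (X ω)),
      T y = p1 → y ∈ (fun ω => gY (X ω)) '' {ω | gH (X ω) = p1}) :
    ∀ T' : 𝕐 → ℍ,
      {y ∈ Set.range (fun ω => gY (X ω)) |
          gH '' (X '' {ω | gY (X ω) = y}) = {T' y}}.ncard ≤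
        {y ∈ Set.range (fun ω => gY (X ω)) |
          gH '' (X '' {ω | gY (X ω) = y}) = {T y}}.ncard :=
  optimal_test_discrete_general p0 p1 hcover X gY gH T hT0 hT1
end

section
/- For the masking policy g_Y, the intersection of the conditional output ranges is contained in the hypersurface cut out by g: ⟦Y|p0⟧ ∩ ⟦Y|p1⟧ ⊆ {y ∈ ℝ^n : y_i = g(y_{−i})}. -/
open Set

/-- The vector of coordinates of `x` other than the `i`-th one (`x_{-i}`). -/
def removeCoord {n : ℕ} (i : Fin n) (x : Fin n → ℝ) : {j : Fin n // j ≠ i} → ℝ :=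
  fun j => x j.1

/-- The masking reporting policy `g_Y`: it replaces the `i`-th coordinate of `x` by
`g(x_{-i})` whenever `g(x_{-i}) - 1/ρ ≤ x_i ≤ g(x_{-i}) + 1/ρ`, and reports `x`
unchanged otherwise. -/
noncomputable def maskPolicy {n : ℕ} (i : Fin n) (ρ : ℝ)
    (g : ({j : Fin n // j ≠ i} → ℝ) → ℝ) (x : Fin n → ℝ) : Fin n → ℝ :=
  if g (removeCoord i x) - 1/ρ ≤ x i ∧ x i ≤ g (removeCoord i x) + 1/ρ then
    Function.update x i (g (removeCoord i x))
  else x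

/-- The hypothesis map `g_H`: `g_H(x) = p0` if `x_i − g(x_{−i}) ≥ 0` and
`g_H(x) = p1` if `x_i − g(x_{−i}) < 0`. -/
noncomputable def hypMap {ℍ : Type*} (p0 p1 : ℍ) {n : ℕ} (i : Fin n)
    (g : ({j : Fin n // j ≠ i} → ℝ) → ℝ) (x : Fin n → ℝ) : ℍ :=
  if 0 ≤ x i - g (removeCoord i x) then p0 else p1

/- A report off the hypersurface `y_i = g(y_{-i})` was not masked, so it equals the input and
thereby determines the hypothesis `g_H`; it therefore cannot arise under both `p0` and `p1`. -/

theorem removeCoord_update_self {n : ℕ} (i : Fin n) (x : Fin n → ℝ) (c : ℝ) :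
    removeCoord i (Function.update x i c) = removeCoord i x := by
  ext j
  exact Function.update_of_ne j.2 c x

theorem maskPolicy_on_hypersurface_or_eq {n : ℕ} (i : Fin n) (ρ : ℝ)
    (g : ({j : Fin n // j ≠ i} → ℝ) → ℝ) (x : Fin n → ℝ) :
    maskPolicy i ρ g x i = g (removeCoord i (maskPolicy i ρ g x)) ∨ maskPolicy i ρ g x = x := by
  unfold maskPolicy
  split_ifs
  · exact .inl <| by rw [removeCoord_update_self, Function.update_self]
  · exact .inr rfl

theorem eq_of_maskPolicy_eq {n : ℕ} {i : Fin n} {ρ : ℝ}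
    {g : ({j : Fin n // j ≠ i} → ℝ) → ℝ} {x y : Fin n → ℝ} (hxy : maskPolicy i ρ g x = y)
    (hy : y i ≠ g (removeCoord i y)) : x = y := by
  subst hxy
  exact ((maskPolicy_on_hypersurface_or_eq i ρ g x).resolve_left hy).symm

theorem maskPolicy_overlap_subset_hypersurface_general {Ω ℍ : Type*}
    (p0 p1 : ℍ) (hp : p0 ≠ p1) {n : ℕ} (i : Fin n) (ρ : ℝ)
    (g : ({j : Fin n // j ≠ i} → ℝ) → ℝ) (X : Ω → (Fin n → ℝ)) :
    ((fun ω => maskPolicy i ρ g (X ω)) '' {ω | hypMap p0 p1 i g (X ω) = p0}) ∩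
        ((fun ω => maskPolicy i ρ g (X ω)) '' {ω | hypMap p0 p1 i g (X ω) = p1}) ⊆
      {y : Fin n → ℝ | y i = g (removeCoord i y)} := by
  rintro y ⟨⟨ω0, h0, hy0⟩, ω1, h1, hy1⟩
  by_contra hy
  have hX0 : X ω0 = y := eq_of_maskPolicy_eq hy0 hy
  have hX1 : X ω1 = y := eq_of_maskPolicy_eq hy1 hy
  have hH0 : hypMap p0 p1 i g y = p0 := hX0 ▸ h0
  have hH1 : hypMap p0 p1 i g y = p1 := hX1 ▸ h1
  exact hp (hH0.symm.trans hH1)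

/-- **The overlap of the conditional output ranges lies on the hypersurface of `g`.**
For the masking policy `g_Y`, with `Y = g_Y ∘ X` and `H = g_H ∘ X`,
`⟦Y|p0⟧ ∩ ⟦Y|p1⟧ ⊆ {y ∈ ℝ^n : y_i = g(y_{−i})}`. -/
theorem maskPolicy_overlap_subset_hypersurface {Ω ℍ : Type*} [Nonempty Ω]
    (p0 p1 : ℍ) (hp : p0 ≠ p1) {n : ℕ} (i : Fin n) (ρ : ℝ) (hρ : 0 < ρ)
    (g : ({j : Fin n // j ≠ i} → ℝ) → ℝ) (X : Ω → (Fin n → ℝ)) :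
    ((fun ω => maskPolicy i ρ g (X ω)) '' {ω | hypMap p0 p1 i g (X ω) = p0}) ∩
        ((fun ω => maskPolicy i ρ g (X ω)) '' {ω | hypMap p0 p1 i g (X ω) = p1}) ⊆
      {y : Fin n → ℝ | y i = g (removeCoord i y)} :=
  maskPolicy_overlap_subset_hypersurface_general p0 p1 hp i ρ g X
end
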